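/- For natural numbers X, Y, S with Y ≥ X, Ξ(X,Y,S) = Σ_{i=0}^{m} (−1)^i · C(X,2i) · (2i−1)!! · C(Y+2S−2i, Y) · (2S−2i−1)!!, where m = min(⌊X/2⌋, S), Ξ as above, and (−1)!! = 1. -/

import Mathlib

/-!
Deleting the first step of a trajectory gives the recursion
`Ξ(X,Y,S) = [X = Y ∧ S = 0] + (Y+1) Ξ(X,Y+1,S-1) + Ξ(X,Y-1,S)` (the last two terms only when
`S ≥ 1`, resp. `Y ≥ 1`). The `i = 0` term `f(Y,T) = C(Y+2T,Y) (2T-1)!! = (Y+2T)! / (Y! 2^T T!)`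
satisfies the same recursion, `f(Y+1,T+1) = (Y+2) f(Y+2,T) + f(Y,T+1)` and `f(0,T+1) = f(1,T)`,
and so does every combination `∑ c_i f(Y,S-i)` with coefficients independent of `Y`, as long as
`c_{S+1} = 0` at the wall `Y = 0`. Both sides equal `1` on `S = 0, X ≤ Y`, and both vanish on
the line `X = Y + 2S`: no trajectory climbs that high, and the formula collapses there to
`f(Y,S) ∑ (-1)^i C(S,i)`. Induction on `Y + 2S` over the region `X ≤ Y + 2S` concludes.
-/

/-- The heights attained immediately after each up-step of a trajectory
(listed in order of occurrence): `e(Δ,1), …, e(Δ,S)`. -/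
def upsList (L : List ℕ) : List ℕ :=
  ((L.zip L.tail).filter (fun p => p.2 == p.1 + 1)).map Prod.snd

/-- `L` is a ±1-step trajectory (of nonnegative integers) from `Y` to `X`. -/
def IsTraj (Y X : ℕ) (L : List ℕ) : Prop :=
  L.head? = some Y ∧ L.getLast? = some X ∧
    L.Chain' (fun a b => b = a + 1 ∨ a = b + 1)

/-- `Ω(X,Y,S)`: nonnegative ±1-step trajectories from `Y` to `X` with exactly `S` up-steps. -/
def Omega (X Y S : ℕ) : Set (List ℕ) :=
  {L | IsTraj Y X L ∧ (upsList L).length = S}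

/-- `Ξ(X,Y,S) = Σ_{Δ ∈ Ω(X,Y,S)} ∏_{j=1}^{S} e(Δ,j)`. -/
noncomputable def XiZ (X Y S : ℕ) : ℤ :=
  ∑ᶠ L ∈ Omega X Y S, ((upsList L).prod : ℤ)

open Finset
open scoped Nat

theorem upsList_cons_cons (a b : ℕ) (t : List ℕ) :
    upsList (a :: b :: t) = if b = a + 1 then b :: upsList (b :: t) else upsList (b :: t) := by
  by_cases h : b = a + 1 <;> simp [upsList, h]

theorem not_isTraj_nil (Y X : ℕ) : ¬IsTraj Y X [] := by
  simp [IsTraj]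

theorem IsTraj.head_eq {Y X b : ℕ} {t : List ℕ} (h : IsTraj Y X (b :: t)) : b = Y := by
  simpa [IsTraj] using h.1

theorem isTraj_singleton {Y X a : ℕ} : IsTraj Y X [a] ↔ a = Y ∧ a = X := by
  simp only [IsTraj, List.head?_cons, List.getLast?_singleton, Option.some.injEq]
  exact ⟨fun h => ⟨h.1, h.2.1⟩, fun h => ⟨h.1, h.2, List.isChain_singleton a⟩⟩

theorem isTraj_cons_cons {Y X a b : ℕ} {t : List ℕ} :
    IsTraj Y X (a :: b :: t) ↔ a = Y ∧ (b = a + 1 ∨ a = b + 1) ∧ IsTraj b X (b :: t) := by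
  simp only [IsTraj, List.head?_cons, List.getLast?_cons_cons, Option.some.injEq]
  exact ⟨fun ⟨hY, hX, hc⟩ => ⟨hY, (List.isChain_cons_cons.1 hc).1, trivial, hX,
      (List.isChain_cons_cons.1 hc).2⟩,
    fun ⟨hY, hab, _, hX, hc⟩ => ⟨hY, hX, List.isChain_cons_cons.2 ⟨hab, hc⟩⟩⟩

theorem IsTraj.upsList_cons {b X : ℕ} {M : List ℕ} (h : IsTraj b X M) (a : ℕ) :
    upsList (a :: M) = if b = a + 1 then b :: upsList M else upsList M := by
  rcases M with _ | ⟨c, t⟩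
  · exact absurd h (not_isTraj_nil b X)
  · obtain rfl := h.head_eq
    exact upsList_cons_cons a c t

theorem IsTraj.le_add_length_upsList {Y X : ℕ} {L : List ℕ} (h : IsTraj Y X L) :
    X ≤ Y + (upsList L).length := by
  induction L generalizing Y with
  | nil => exact absurd h (not_isTraj_nil Y X)
  | cons a t ih =>
    rcases t with _ | ⟨b, t⟩
    · rw [isTraj_singleton] at h
      omega
    · obtain ⟨rfl, hstep, ht⟩ := isTraj_cons_cons.1 h
      have := ih ht
      rw [upsList_cons_cons]
      split_ifs <;> grind

theorem Omega_eq_union (X Y S : ℕ) : Omega X Y S =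
    {L | L = [Y] ∧ X = Y ∧ S = 0} ∪
      (Y :: ·) '' {M | 0 < S ∧ M ∈ Omega X (Y + 1) (S - 1)} ∪
      (Y :: ·) '' {M | 0 < Y ∧ M ∈ Omega X (Y - 1) S} := by
  ext L
  rcases L with _ | ⟨a, _ | ⟨b, t⟩⟩
  · simp [Omega, not_isTraj_nil]
  · simp [Omega, isTraj_singleton, upsList, not_isTraj_nil]
    grind
  · simp only [Omega, Set.mem_union, Set.mem_ofPred_eq, Set.mem_image, List.cons.injEq,
      isTraj_cons_cons, upsList_cons_cons]
    constructor
    · rintro ⟨⟨rfl, rfl | rfl, ht⟩, hS⟩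
      · simp only [if_pos, List.length_cons] at hS
        exact Or.inl (Or.inr ⟨_, ⟨by omega, ht, by omega⟩, rfl, rfl⟩)
      · rw [if_neg (by omega)] at hS
        exact Or.inr ⟨_, ⟨by omega, ht, hS⟩, rfl, rfl⟩
    · rintro ((⟨h, -⟩ | ⟨_, ⟨hS, hM, hlen⟩, rfl, rfl⟩) | ⟨_, ⟨hY, hM, hlen⟩, rfl, rfl⟩)
      · simp at h
      · obtain rfl := hM.head_eq
        rw [if_pos rfl, List.length_cons]
        exact ⟨⟨rfl, Or.inl rfl, hM⟩, by omega⟩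
      · obtain rfl := hM.head_eq
        rw [if_neg (by omega)]
        exact ⟨⟨rfl, Or.inr (by omega), hM⟩, hlen⟩

theorem Omega_finite (X Y S : ℕ) : (Omega X Y S).Finite := by
  have hup : {M | 0 < S ∧ M ∈ Omega X (Y + 1) (S - 1)}.Finite := by
    by_cases hS : 0 < S
    · exact (Omega_finite X (Y + 1) (S - 1)).subset fun M hM => hM.2
    · simp [hS]
  have hdown : {M | 0 < Y ∧ M ∈ Omega X (Y - 1) S}.Finite := by
    by_cases hY : 0 < Y
    · exact (Omega_finite X (Y - 1) S).subset fun M hM => hM.2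
    · simp [hY]
  rw [Omega_eq_union]
  exact (((Set.finite_singleton [Y]).subset fun L hL => hL.1).union (hup.image _)).union
    (hdown.image _)
termination_by Y + 2 * S

theorem Omega_eq_empty {X Y S : ℕ} (h : Y + S < X) : Omega X Y S = ∅ :=
  Set.eq_empty_of_forall_notMem fun L ⟨hL, hS⟩ => by
    have := hL.le_add_length_upsList
    omega

theorem XiZ_eq_zero_of_lt {X Y S : ℕ} (h : Y + S < X) : XiZ X Y S = 0 := by
  rw [XiZ, Omega_eq_empty h, finsum_mem_empty]

theorem XiZ_eq_ite (X Y S : ℕ) :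
    XiZ X Y S = (if X = Y ∧ S = 0 then 1 else 0)
      + (if 0 < S then (Y + 1 : ℤ) * XiZ X (Y + 1) (S - 1) else 0)
      + (if 0 < Y then XiZ X (Y - 1) S else 0) := by
  set A : Set (List ℕ) := {L | L = [Y] ∧ X = Y ∧ S = 0}
  set B : Set (List ℕ) := {M | 0 < S ∧ M ∈ Omega X (Y + 1) (S - 1)}
  set C : Set (List ℕ) := {M | 0 < Y ∧ M ∈ Omega X (Y - 1) S}
  have hA : A.Finite := (Set.finite_singleton [Y]).subset fun L hL => hL.1
  have hB : B.Finite := (Omega_finite X (Y + 1) (S - 1)).subset fun M hM => hM.2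
  have hC : C.Finite := (Omega_finite X (Y - 1) S).subset fun M hM => hM.2
  have hA_disjoint {D : Set (List ℕ)} {X' Y' S' : ℕ} (hD : D ⊆ Omega X' Y' S') :
      Disjoint A ((Y :: ·) '' D) := by
    refine Set.disjoint_left.2 ?_
    rintro L ⟨rfl, -⟩ ⟨M, hM, hML⟩
    obtain rfl : M = [] := by simpa using hML
    exact not_isTraj_nil _ _ (hD hM).1
  have hBC : Disjoint ((Y :: ·) '' B) ((Y :: ·) '' C) := by
    refine Set.disjoint_left.2 ?_
    rintro L ⟨M, ⟨-, hM⟩, rfl⟩ ⟨M', ⟨hY, hM'⟩, hML⟩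
    obtain rfl : M' = M := by simpa using hML
    have := hM.1.1.symm.trans hM'.1.1
    simp at this
    omega
  have hAB : Disjoint A ((Y :: ·) '' B) := hA_disjoint fun M hM => hM.2
  have hABC : Disjoint (A ∪ (Y :: ·) '' B) ((Y :: ·) '' C) :=
    Set.disjoint_union_left.2 ⟨hA_disjoint fun M hM => hM.2, hBC⟩
  have hinj {D : Set (List ℕ)} : D.InjOn (Y :: ·) := List.cons_injective.injOn
  rw [XiZ, Omega_eq_union, finsum_mem_union hABC (hA.union (hB.image _)) (hC.image _),
    finsum_mem_union hAB hA (hB.image _), finsum_mem_image hinj, finsum_mem_image hinj]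
  congr 1
  congr 1
  · split_ifs with h
    · obtain ⟨rfl, rfl⟩ := h
      simp [A, upsList]
    · simp [A, h]
  · split_ifs with hS
    · rw [XiZ, mul_finsum_mem]
      refine finsum_mem_congr (by simp [B, hS]) fun M hM => ?_
      rw [hM.1.upsList_cons, if_pos rfl]
      push_cast [List.prod_cons]
      rfl
    · simp [B, hS]
  · split_ifs with hY
    · refine finsum_mem_congr (by simp [C, hY]) fun M hM => ?_
      rw [hM.1.upsList_cons, if_neg (by omega)]
    · simp [C, hY]

theorem XiZ_zero_right {X Y : ℕ} (h : X ≤ Y) : XiZ X Y 0 = 1 := by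
  induction Y with
  | zero =>
    obtain rfl : X = 0 := by omega
    simp [XiZ_eq_ite 0 0 0]
  | succ Y ih =>
    rw [XiZ_eq_ite]
    rcases h.eq_or_lt with rfl | h
    · simp [XiZ_eq_zero_of_lt (show Y + 0 < Y + 1 by omega)]
    · simp [ih (by omega), show X ≠ Y + 1 by omega]

theorem XiZ_zero_succ (X S : ℕ) : XiZ X 0 (S + 1) = XiZ X 1 S := by
  simp [XiZ_eq_ite X 0 (S + 1)]

theorem XiZ_succ_succ (X Y S : ℕ) :
    XiZ X (Y + 1) (S + 1) = (Y + 2) * XiZ X (Y + 2) S + XiZ X Y (S + 1) := by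
  rw [XiZ_eq_ite X (Y + 1) (S + 1)]
  simp only [add_eq_zero, one_ne_zero, and_false, if_false, zero_add, Nat.add_sub_cancel,
    Nat.zero_lt_succ, if_true]
  push_cast
  ring

theorem cast_doubleFactorial_two_mul_sub_one (m : ℕ) :
    ((2 * m - 1)‼ : ℚ) = (2 * m)! / (2 ^ m * m !) := by
  rw [eq_div_iff (by positivity)]
  rcases m with _ | m
  · simp
  · have h := Nat.factorial_eq_mul_doubleFactorial (2 * m + 1)
    rw [show 2 * m + 1 + 1 = 2 * (m + 1) by ring, Nat.doubleFactorial_two_mul] at h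
    rw [show 2 * (m + 1) - 1 = 2 * m + 1 by omega, h]
    push_cast
    ring

/-- `Ξ(0, Y, T)`, the `i = 0` term of the formula. -/
def xiZero (Y T : ℕ) : ℕ := (Y + 2 * T).choose Y * (2 * T - 1)‼

theorem cast_xiZero (Y T : ℕ) : (xiZero Y T : ℚ) = (Y + 2 * T)! / (Y ! * 2 ^ T * T !) := by
  rw [xiZero, Nat.cast_mul, Nat.cast_add_choose, cast_doubleFactorial_two_mul_sub_one]
  field_simp

theorem xiZero_zero_right (Y : ℕ) : xiZero Y 0 = 1 := by simp [xiZero]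

theorem xiZero_succ_succ (Y T : ℕ) :
    xiZero (Y + 1) (T + 1) = (Y + 2) * xiZero (Y + 2) T + xiZero Y (T + 1) := by
  qify
  simp only [cast_xiZero, show Y + 1 + 2 * (T + 1) = Y + 2 * T + 2 + 1 by ring,
    show Y + 2 + 2 * T = Y + 2 * T + 2 by ring, show Y + 2 * (T + 1) = Y + 2 * T + 2 by ring,
    Nat.factorial_succ]
  push_cast
  field_simp
  ring

theorem xiZero_zero_succ (T : ℕ) : xiZero 0 (T + 1) = xiZero 1 T := by
  qify
  simp only [cast_xiZero, show 0 + 2 * (T + 1) = 2 * T + 1 + 1 by ring, add_comm 1,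
    Nat.factorial_succ]
  push_cast
  field_simp
  ring

theorem choose_mul_doubleFactorial_mul_xiZero (Y i j : ℕ) :
    (Y + 2 * (i + j)).choose (2 * i) * (2 * i - 1)‼ * xiZero Y j
      = xiZero Y (i + j) * (i + j).choose i := by
  qify
  rw [show Y + 2 * (i + j) = 2 * i + (Y + 2 * j) by ring, Nat.cast_add_choose, Nat.cast_add_choose,
    cast_doubleFactorial_two_mul_sub_one, cast_xiZero, cast_xiZero,
    show 2 * i + (Y + 2 * j) = Y + 2 * (i + j) by ring]
  field_simp
  ring

/-- The right-hand side, indexed by `i + j = S`; the extra terms with `2 * i > X` vanish. -/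
def xiFormula (X Y S : ℕ) : ℤ :=
  ∑ p ∈ antidiagonal S, (-1) ^ p.1 * X.choose (2 * p.1) * (2 * p.1 - 1)‼ * xiZero Y p.2

theorem xiFormula_zero_right (X Y : ℕ) : xiFormula X Y 0 = 1 := by
  simp [xiFormula, xiZero_zero_right]

theorem xiFormula_succ_succ (X Y S : ℕ) :
    xiFormula X (Y + 1) (S + 1) = (Y + 2) * xiFormula X (Y + 2) S + xiFormula X Y (S + 1) := by
  simp only [xiFormula, Nat.sum_antidiagonal_succ', xiZero_zero_right, xiZero_succ_succ, mul_sum]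
  push_cast
  simp only [mul_add, sum_add_distrib, mul_left_comm _ ((Y : ℤ) + 2)]
  ring

theorem xiFormula_zero_succ {X S : ℕ} (hX : X < 2 * S + 2) :
    xiFormula X 0 (S + 1) = xiFormula X 1 S := by
  simp [xiFormula, Nat.sum_antidiagonal_succ', xiZero_zero_succ,
    Nat.choose_eq_zero_of_lt (show X < 2 * (S + 1) by omega)]

theorem xiFormula_top {Y S : ℕ} (hS : S ≠ 0) : xiFormula (Y + 2 * S) Y S = 0 := by
  have hterm : ∀ p ∈ antidiagonal S,
      (-1 : ℤ) ^ p.1 * (Y + 2 * S).choose (2 * p.1) * (2 * p.1 - 1)‼ * xiZero Y p.2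
        = xiZero Y S * ((-1) ^ p.1 * S.choose p.1) := by
    rintro ⟨i, j⟩ hij
    rw [HasAntidiagonal.mem_antidiagonal] at hij
    subst hij
    have key : ((Y + 2 * (i + j)).choose (2 * i) * (2 * i - 1)‼ * xiZero Y j : ℤ)
        = xiZero Y (i + j) * (i + j).choose i := by
      exact_mod_cast choose_mul_doubleFactorial_mul_xiZero Y i j
    linear_combination (-1 : ℤ) ^ i * key
  rw [xiFormula, sum_congr rfl hterm, ← mul_sum, Nat.sum_antidiagonal_eq_sum_range_succ_mk,
    Int.alternating_sum_range_choose_of_ne hS, mul_zero]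

theorem xiFormula_eq_sum (X Y S : ℕ) :
    xiFormula X Y S = ∑ i ∈ range (min (X / 2) S + 1),
        (-1 : ℤ) ^ i * (Nat.choose X (2 * i) : ℤ) *
          (Nat.doubleFactorial (2 * i - 1) : ℤ) *
          ((Nat.choose (Y + 2 * S - 2 * i) Y : ℤ) *
            (Nat.doubleFactorial (2 * S - 2 * i - 1) : ℤ)) := by
  rw [xiFormula, Nat.sum_antidiagonal_eq_sum_range_succ_mk]
  symm
  refine sum_subset_zero_on_sdiff (range_subset_range.2 (by omega)) (fun i hi => ?_)
    fun i hi => ?_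
  · simp only [mem_sdiff, mem_range] at hi
    simp [Nat.choose_eq_zero_of_lt (show X < 2 * i by omega)]
  · simp only [mem_range] at hi
    simp only [xiZero, Nat.cast_mul, show Y + 2 * (S - i) = Y + 2 * S - 2 * i by omega,
      show 2 * (S - i) - 1 = 2 * S - 2 * i - 1 by omega]

theorem XiZ_eq_xiFormula {X Y S : ℕ} (h : X ≤ Y + 2 * S) : XiZ X Y S = xiFormula X Y S := by
  -- on the line `X = Y + 2 * S` the recursion leaves the region, so it is treated directly
  by_cases htop : X = Y + 2 * S ∧ S ≠ 0
  · obtain ⟨rfl, hS⟩ := htop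
    rw [XiZ_eq_zero_of_lt (by omega), xiFormula_top hS]
  match Y, S with
  | Y, 0 => rw [XiZ_zero_right (by omega), xiFormula_zero_right]
  | 0, S + 1 => rw [XiZ_zero_succ, xiFormula_zero_succ (by omega), XiZ_eq_xiFormula (by omega)]
  | Y + 1, S + 1 =>
    rw [XiZ_succ_succ, xiFormula_succ_succ, XiZ_eq_xiFormula (by omega),
      XiZ_eq_xiFormula (by omega)]
termination_by Y + 2 * S

theorem stmt16 (X Y S : ℕ) (hXY : X ≤ Y) :
    XiZ X Y S =
      ∑ i ∈ Finset.range (min (X / 2) S + 1),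
        (-1 : ℤ) ^ i * (Nat.choose X (2 * i) : ℤ) *
          (Nat.doubleFactorial (2 * i - 1) : ℤ) *
          ((Nat.choose (Y + 2 * S - 2 * i) Y : ℤ) *
            (Nat.doubleFactorial (2 * S - 2 * i - 1) : ℤ)) := by
  rw [XiZ_eq_xiFormula (by omega), xiFormula_eq_sum]
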